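/- If f(z) = z + Σ_{n≥2} a_n z^n is analytic on U and Σ_{n≥2} n(n-α-(n-1)αβ)|a_n| ≤ 1-α, then Re[ (f'(z) + z f''(z)) / (f'(z) + β z f''(z)) ] > α for all z ∈ U. -/

import Mathlib

/-!
With `P = f' + z f''` and `Q = f' + β z f''` we have `P - Q = (1 - β) z f''`, and
`α < Re (P / Q)` follows from `‖P - Q‖ < (1 - α) ‖Q‖`. Bounding `‖z f''‖` from above and `‖Q‖`
from below termwise, with `r = ‖z‖`, it suffices that
`∑ ((1 - β) n (n - 1) + (1 - α) n (1 + (n - 1) β)) ‖a_n‖ r^(n-1) < 1 - α`.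
The bracket is exactly `n (n - α - (n - 1) α β)`, and `r^(n-1) ≤ r < 1`.
-/

open Complex Metric

theorem lt_re_div_of_norm_sub_lt {α : ℝ} {g h : ℂ} (hlt : ‖g - h‖ < (1 - α) * ‖h‖) :
    α < (g / h).re := by
  have hh : h ≠ 0 := by rintro rfl; simp at hlt; linarith [norm_nonneg g]
  have hdist : ‖g / h - 1‖ < 1 - α := by
    rwa [div_sub_one hh, norm_div, div_lt_iff₀ (norm_pos_iff.mpr hh)]
  have := Complex.abs_re_le_norm (g / h - 1)
  rw [sub_re, one_re] at this
  linarith [neg_abs_le ((g / h).re - 1)]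

theorem lt_re_div_of_norm_le {α β U V : ℝ} {u v : ℂ} (hβ0 : 0 ≤ β) (hβ1 : β ≤ 1) (hα : α ≤ 1)
    (hu : ‖u‖ ≤ U) (hv : ‖v‖ ≤ V) (h : (1 - β) * V + (1 - α) * (U + β * V) < 1 - α) :
    α < ((1 + u + v) / (1 + u + β * v)).re := by
  apply lt_re_div_of_norm_sub_lt
  have hβv : ‖(β : ℂ) * v‖ ≤ β * V := by
    rw [norm_mul, norm_real, Real.norm_of_nonneg hβ0]; gcongr
  have hden : 1 - U - β * V ≤ ‖1 + u + β * v‖ := by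
    have h1 : ‖(1 : ℂ)‖ ≤ ‖1 + u + β * v‖ + ‖u + β * v‖ := by
      simpa using norm_sub_le (1 + u + β * v) (u + β * v)
    linarith [norm_add_le u (β * v), norm_one (α := ℂ)]
  calc ‖1 + u + v - (1 + u + β * v)‖ = (1 - β) * ‖v‖ := by
        rw [show 1 + u + v - (1 + u + β * v) = ((1 - β : ℝ) : ℂ) * v by push_cast; ring,
          norm_mul, norm_real, Real.norm_of_nonneg (by linarith)]
    _ ≤ (1 - β) * V := by gcongr
    _ < (1 - α) * (1 - U - β * V) := by linarith
    _ ≤ (1 - α) * ‖1 + u + β * v‖ := by gcongr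

theorem hasDerivAt_tsum_mul_pow {b : ℕ → ℂ} {k : ℕ} (hk : k ≠ 0)
    (hb : Summable fun n => ‖((n + k : ℕ) : ℂ) * b n‖) {z : ℂ} (hz : z ∈ ball (0 : ℂ) 1) :
    HasDerivAt (fun w => ∑' n, b n * w ^ (n + k))
      (∑' n, ((n + k : ℕ) : ℂ) * b n * z ^ (n + k - 1)) z := by
  refine hasDerivAt_tsum_of_isPreconnected (g := fun n w => b n * w ^ (n + k))
    (g' := fun n w => ((n + k : ℕ) : ℂ) * b n * w ^ (n + k - 1)) hb isOpen_ball
    (convex_ball _ _).isPreconnected (fun n y _ => ?_) (fun n y hy => ?_) (mem_ball_self one_pos)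
    (by simp [hk]) hz
  · exact ((hasDerivAt_pow _ y).const_mul (b n)).congr_deriv (by ring)
  · rw [mem_ball_zero_iff] at hy
    rw [norm_mul _ (y ^ _), norm_pow]
    exact mul_le_of_le_one_right (norm_nonneg _) (pow_le_one₀ (norm_nonneg _) hy.le)

theorem hasDerivAt_of_hasSum_pow {f : ℂ → ℂ} {a : ℕ → ℂ}
    (hf : ∀ z ∈ ball (0 : ℂ) 1, HasSum (fun n => a (n + 2) * z ^ (n + 2)) (f z - z))
    (h1 : Summable fun n => ‖((n + 2 : ℕ) : ℂ) * a (n + 2)‖) {z : ℂ} (hz : z ∈ ball (0 : ℂ) 1) :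
    HasDerivAt f (1 + ∑' n, ((n + 2 : ℕ) : ℂ) * a (n + 2) * z ^ (n + 1)) z := by
  have hfeq : f =ᶠ[nhds z] fun w => w + ∑' n, a (n + 2) * w ^ (n + 2) := by
    filter_upwards [isOpen_ball.mem_nhds hz] with w hw
    rw [(hf w hw).tsum_eq]; ring
  exact ((hasDerivAt_id z).add (hasDerivAt_tsum_mul_pow two_ne_zero h1 hz)).congr_of_eventuallyEq
    hfeq

theorem deriv_deriv_eq_tsum {f : ℂ → ℂ} {a : ℕ → ℂ}
    (hf : ∀ z ∈ ball (0 : ℂ) 1, HasSum (fun n => a (n + 2) * z ^ (n + 2)) (f z - z))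
    (h1 : Summable fun n => ‖((n + 2 : ℕ) : ℂ) * a (n + 2)‖)
    (h2 : Summable fun n => ‖((n + 1 : ℕ) : ℂ) * (((n + 2 : ℕ) : ℂ) * a (n + 2))‖)
    {z : ℂ} (hz : z ∈ ball (0 : ℂ) 1) :
    deriv (deriv f) z = ∑' n, ((n + 1 : ℕ) : ℂ) * (((n + 2 : ℕ) : ℂ) * a (n + 2)) * z ^ n := by
  have hfeq : deriv f =ᶠ[nhds z]
      fun w => 1 + ∑' n, ((n + 2 : ℕ) : ℂ) * a (n + 2) * w ^ (n + 1) := by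
    filter_upwards [isOpen_ball.mem_nhds hz] with w hw
    exact (hasDerivAt_of_hasSum_pow hf h1 hw).deriv
  rw [hfeq.deriv_eq, deriv_const_add, (hasDerivAt_tsum_mul_pow one_ne_zero h2 hz).deriv]
  rfl

theorem summable_of_summable_coeff {α β : ℝ} (hα : α ≤ 1) (hβ0 : 0 ≤ β) (hβ1 : β < 1)
    {A : ℕ → ℝ} (hA : ∀ n, 0 ≤ A n)
    (hsum : Summable fun n : ℕ =>
      ((n : ℝ) + 2) * (((n : ℝ) + 2) - α - ((n : ℝ) + 1) * α * β) * A n) :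
    Summable fun n : ℕ => ((n + 1 : ℕ) : ℝ) * (((n + 2 : ℕ) : ℝ) * A n) := by
  refine (hsum.mul_left (1 - β)⁻¹).of_nonneg_of_le (fun n => by have := hA n; positivity)
    fun n => ?_
  rw [le_inv_mul_iff₀ (sub_pos.2 hβ1)]
  have : 0 ≤ (1 - α) * (((n : ℝ) + 2) * (1 + ((n : ℝ) + 1) * β)) * A n :=
    mul_nonneg (mul_nonneg (sub_nonneg.2 hα) (by positivity)) (hA n)
  push_cast
  linear_combination this

theorem Summable.mul_pow_succ {x : ℕ → ℝ} (hx : Summable x) (hx0 : ∀ n, 0 ≤ x n) {r : ℝ}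
    (hr0 : 0 ≤ r) (hr1 : r ≤ 1) : Summable fun n => x n * r ^ (n + 1) :=
  hx.of_nonneg_of_le (fun n => mul_nonneg (hx0 n) (pow_nonneg hr0 _))
    fun n => mul_le_of_le_one_right (hx0 n) (pow_le_one₀ hr0 hr1)

theorem norm_tsum_mul_pow_succ_le {b : ℕ → ℂ} (hb : Summable fun n => ‖b n‖) {z : ℂ}
    (hz : ‖z‖ ≤ 1) : ‖∑' n, b n * z ^ (n + 1)‖ ≤ ∑' n, ‖b n‖ * ‖z‖ ^ (n + 1) :=
  tsum_of_norm_bounded (hb.mul_pow_succ (fun _ => norm_nonneg _) (norm_nonneg z) hz).hasSum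
    fun n => by rw [norm_mul, norm_pow]

theorem tsum_mul_pow_combination_lt {α β r : ℝ} (hα : α < 1) (hβ0 : 0 ≤ β) (hβ1 : β ≤ 1)
    (hr0 : 0 ≤ r) (hr1 : r < 1) {x y c : ℕ → ℝ} (hx : Summable x) (hy : Summable y)
    (hc : Summable c) (hx0 : ∀ n, 0 ≤ x n) (hy0 : ∀ n, 0 ≤ y n)
    (hxyc : ∀ n, (1 - β) * y n + (1 - α) * (x n + β * y n) = c n) (hle : ∑' n, c n ≤ 1 - α) :
    (1 - β) * ∑' n, y n * r ^ (n + 1) +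
      (1 - α) * (∑' n, x n * r ^ (n + 1) + β * ∑' n, y n * r ^ (n + 1)) < 1 - α := by
  have hxr := (hx.mul_pow_succ hx0 hr0 hr1.le).hasSum
  have hyr := (hy.mul_pow_succ hy0 hr0 hr1.le).hasSum
  have hcr : HasSum (fun n => c n * r ^ (n + 1)) ((1 - β) * ∑' n, y n * r ^ (n + 1) +
      (1 - α) * (∑' n, x n * r ^ (n + 1) + β * ∑' n, y n * r ^ (n + 1))) := by
    have hterm : (fun n => c n * r ^ (n + 1)) = fun n => (1 - β) * (y n * r ^ (n + 1)) +
        (1 - α) * (x n * r ^ (n + 1) + β * (y n * r ^ (n + 1))) := by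
      funext n; rw [← hxyc n]; ring
    rw [hterm]
    exact (hyr.mul_left (1 - β)).add ((hxr.add (hyr.mul_left β)).mul_left (1 - α))
  have hc0 : ∀ n, 0 ≤ c n := fun n => hxyc n ▸
    add_nonneg (mul_nonneg (sub_nonneg.2 hβ1) (hy0 n))
      (mul_nonneg (sub_nonneg.2 hα.le) (add_nonneg (hx0 n) (mul_nonneg hβ0 (hy0 n))))
  calc _ ≤ (∑' n, c n) * r := hasSum_le (fun n => mul_le_mul_of_nonneg_left
          (pow_le_of_le_one hr0 hr1.le n.succ_ne_zero) (hc0 n)) hcr (hc.hasSum.mul_right r)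
    _ ≤ (1 - α) * r := mul_le_mul_of_nonneg_right hle hr0
    _ < 1 - α := mul_lt_of_lt_one_right (sub_pos.2 hα) hr1

theorem stmt6_general (α β : ℝ) (hα1 : α < 1) (hβ0 : 0 ≤ β) (hβ1 : β < 1)
    (f : ℂ → ℂ) (a : ℕ → ℂ)
    (hf : ∀ z ∈ Metric.ball (0 : ℂ) 1,
      HasSum (fun n : ℕ => a (n + 2) * z ^ (n + 2)) (f z - z))
    (hsum : Summable (fun n : ℕ =>
      ((n : ℝ) + 2) * (((n : ℝ) + 2) - α - ((n : ℝ) + 1) * α * β) * ‖a (n + 2)‖))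
    (hle : ∑' n : ℕ,
      ((n : ℝ) + 2) * (((n : ℝ) + 2) - α - ((n : ℝ) + 1) * α * β) * ‖a (n + 2)‖ ≤ 1 - α) :
    ∀ z ∈ Metric.ball (0 : ℂ) 1,
      α < (((deriv f z + z * deriv (deriv f) z) /
        (deriv f z + (β : ℂ) * z * deriv (deriv f) z)).re) := by
  intro z hz
  let b : ℕ → ℂ := fun n => ((n + 2 : ℕ) : ℂ) * a (n + 2)
  let b' : ℕ → ℂ := fun n => ((n + 1 : ℕ) : ℂ) * b n
  have hb' : Summable fun n => ‖b' n‖ := by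
    simpa only [b', b, norm_mul, Complex.norm_natCast] using
      summable_of_summable_coeff hα1.le hβ0 hβ1 (fun n => norm_nonneg (a (n + 2))) hsum
  have hb : Summable fun n => ‖b n‖ :=
    hb'.of_nonneg_of_le (fun _ => norm_nonneg _) fun n => by
      rw [show b' n = ((n + 1 : ℕ) : ℂ) * b n from rfl, norm_mul _ (b n)]
      exact le_mul_of_one_le_left (norm_nonneg _) 
        (by rw [Complex.norm_natCast, Nat.one_le_cast]; omega)
  have hzf'' : z * deriv (deriv f) z = ∑' n, b' n * z ^ (n + 1) := by
    rw [deriv_deriv_eq_tsum hf hb hb' hz, ← tsum_mul_left]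
    exact tsum_congr fun n => by ring
  rw [(hasDerivAt_of_hasSum_pow hf hb hz).deriv, hzf'', mul_assoc, hzf'']
  have hz1 := (mem_ball_zero_iff.mp hz).le
  refine lt_re_div_of_norm_le hβ0 hβ1.le hα1.le (norm_tsum_mul_pow_succ_le hb hz1)
    (norm_tsum_mul_pow_succ_le hb' hz1) ?_
  refine tsum_mul_pow_combination_lt hα1 hβ0 hβ1.le (norm_nonneg z) (mem_ball_zero_iff.mp hz)
    hb hb' hsum (fun _ => norm_nonneg _) (fun _ => norm_nonneg _) (fun n => ?_) hle
  simp only [b', b, norm_mul, Complex.norm_natCast]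
  push_cast
  ring

theorem stmt6 (α β : ℝ) (hα0 : 0 ≤ α) (hα1 : α < 1) (hβ0 : 0 ≤ β) (hβ1 : β < 1)
    (f : ℂ → ℂ) (a : ℕ → ℂ)
    (hf : ∀ z ∈ Metric.ball (0 : ℂ) 1,
      HasSum (fun n : ℕ => a (n + 2) * z ^ (n + 2)) (f z - z))
    (hsum : Summable (fun n : ℕ =>
      ((n : ℝ) + 2) * (((n : ℝ) + 2) - α - ((n : ℝ) + 1) * α * β) * ‖a (n + 2)‖))
    (hle : ∑' n : ℕ,
      ((n : ℝ) + 2) * (((n : ℝ) + 2) - α - ((n : ℝ) + 1) * α * β) * ‖a (n + 2)‖ ≤ 1 - α) :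
    ∀ z ∈ Metric.ball (0 : ℂ) 1,
      α < (((deriv f z + z * deriv (deriv f) z) /
        (deriv f z + (β : ℂ) * z * deriv (deriv f) z)).re) :=
  stmt6_general α β hα1 hβ0 hβ1 f a hf hsum hle
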